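/- arXiv:1603.02837 — 3 statements merged into one kernel-verified Lean document; each statement's English description precedes it below -/
import Mathlib

section
/- For a(t) = a₀ exp(a₁ t^(-α)) with a₁ < 0 (Grand Bang), ρ(t) a(t)³ = 3a₁²α² a₀³ t^(-2(α+1)) e^(3a₁ t^(-α)) → 0 as t → 0⁺, while for a₁ > 0 (Grand Rip), ρ(t) a(t)³ → +∞ as t → 0⁺. -/
/-!
Substitute `u = t ^ (-α)`, which tends to `+∞` as `t → 0⁺`.
Since `t ^ (-2(α+1)) = u ^ (2(α+1)/α)`, the densitized energy becomes `3a₁²α²a₀³ · u ^ (2(α+1)/α) · exp (3a₁ u)`, and the exponential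
beats the power: the product tends to `0` if `a₁ < 0` and to `+∞` if `a₁ > 0`.
-/

open Real Filter Topology

theorem Real.rpow_neg_eq_rpow_neg_rpow_div {t : ℝ} (ht : 0 < t) {α : ℝ} (hα : α ≠ 0) (β : ℝ) :
    t ^ (-β) = (t ^ (-α)) ^ (β / α) := by
  rw [← rpow_mul ht.le]
  congr 1
  field_simp

theorem tendsto_rpow_mul_exp_mul_atTop (s : ℝ) {b : ℝ} (hb : 0 < b) :
    Tendsto (fun x : ℝ => x ^ s * exp (b * x)) atTop atTop := by
  refine (tendsto_exp_mul_div_rpow_atTop (-s) b hb).congr' ?_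
  filter_upwards [eventually_gt_atTop 0] with x hx
  rw [rpow_neg hx.le, div_inv_eq_mul, mul_comm]

theorem grand_densitized_energy_eventuallyEq (a₀ a₁ : ℝ) {α : ℝ} (hα : α ≠ 0) :
    (fun t : ℝ =>
        3 * a₁ ^ 2 * α ^ 2 * t ^ (-(2 * (α + 1))) * (a₀ * exp (a₁ * t ^ (-α))) ^ 3)
      =ᶠ[𝓝[>] 0] fun t => 3 * a₁ ^ 2 * α ^ 2 * a₀ ^ 3 *
        ((t ^ (-α)) ^ (2 * (α + 1) / α) * exp (3 * a₁ * t ^ (-α))) := by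
  filter_upwards [self_mem_nhdsWithin] with t (ht : 0 < t)
  rw [rpow_neg_eq_rpow_neg_rpow_div ht hα, mul_pow, ← exp_nat_mul, Nat.cast_ofNat, mul_assoc 3 a₁]
  ring

/-- Grand Bang (`a₁ < 0`): `ρ a³ = 3a₁²α² a₀³ t^(-2(α+1)) e^(3a₁ t^(-α)) → 0`
as `t → 0⁺`; Grand Rip (`a₁ > 0`): `ρ a³ → +∞`. -/
theorem grand_densitized_energy (a₀ a₁ α : ℝ) (ha₀ : 0 < a₀) (hα : 0 < α) :
    (a₁ < 0 →
      Tendsto (fun t : ℝ =>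
          3 * a₁ ^ 2 * α ^ 2 * t ^ (-(2 * (α + 1))) * (a₀ * Real.exp (a₁ * t ^ (-α))) ^ 3)
        (nhdsWithin 0 (Set.Ioi 0)) (nhds 0)) ∧
    (0 < a₁ →
      Tendsto (fun t : ℝ =>
          3 * a₁ ^ 2 * α ^ 2 * t ^ (-(2 * (α + 1))) * (a₀ * Real.exp (a₁ * t ^ (-α))) ^ 3)
        (nhdsWithin 0 (Set.Ioi 0)) atTop) := by
  have hu : Tendsto (fun t : ℝ => t ^ (-α)) (𝓝[>] 0) atTop :=
    tendsto_rpow_neg_nhdsGT_zero (neg_neg_of_pos hα)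
  have heq := grand_densitized_energy_eventuallyEq a₀ a₁ hα.ne'
  refine ⟨fun ha₁ => ?_, fun ha₁ => ?_⟩
  · have hdecay := (tendsto_rpow_mul_exp_neg_mul_atTop_nhds_zero (2 * (α + 1) / α) (-(3 * a₁))
      (by linarith)).const_mul (3 * a₁ ^ 2 * α ^ 2 * a₀ ^ 3)
    simp only [neg_neg, mul_zero] at hdecay
    exact (hdecay.comp hu).congr' heq.symm
  · have hgrowth := (tendsto_rpow_mul_exp_mul_atTop (2 * (α + 1) / α)
      (by positivity : 0 < 3 * a₁)).const_mul_atTop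
        (by positivity : 0 < 3 * a₁ ^ 2 * α ^ 2 * a₀ ^ 3)
    exact (hgrowth.comp hu).congr' heq.symm
end

section
/- For a(t) = a₀ exp(a₁ t^(-α)) with a₀, α > 0 and a₁ ≠ 0, the ratio p(t)/ρ(t) → -1 as t → 0⁺, where ρ = 3ȧ²/a² and p = -2ä/a - ȧ²/a². -/
open Real Filter Topology

/-!
Writing `a = a₀ e^φ`, the Hubble rate is `H = ȧ/a = φ'` and `ä/a = φ'² + φ''`, so that
`p/ρ = -1 - 2φ''/(3φ'²)`. For `φ = a₁ t^(-α)` one gets `φ''/φ'² = (α + 1)/(α a₁) · t^α`,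
which tends to `0` as `t → 0⁺`.
-/

noncomputable def barotropicRatio (a : ℝ → ℝ) (t : ℝ) : ℝ :=
  (-2 * deriv (deriv a) t / a t - (deriv a t) ^ 2 / (a t) ^ 2) /
    (3 * (deriv a t) ^ 2 / (a t) ^ 2)

theorem barotropicRatio_eq_of_hubble {a : ℝ → ℝ} {t H H' : ℝ} (ha : a t ≠ 0) (hH : H ≠ 0)
    (hd : deriv a t = a t * H) (hdd : deriv (deriv a) t = a t * (H ^ 2 + H')) :
    barotropicRatio a t = -1 - 2 * H' / (3 * H ^ 2) := by
  rw [barotropicRatio, hdd, hd]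
  field_simp
  ring

section ConstMulExp

variable {φ φ' : ℝ → ℝ} {φ'' a₀ t : ℝ}

theorem deriv_const_mul_exp_comp (hφ : HasDerivAt φ (φ' t) t) :
    deriv (fun x => a₀ * exp (φ x)) t = a₀ * exp (φ t) * φ' t := by
  rw [(hφ.exp.const_mul a₀).deriv, mul_assoc]

theorem deriv_deriv_const_mul_exp_comp (hφ : ∀ᶠ x in 𝓝 t, HasDerivAt φ (φ' x) x)
    (hφ' : HasDerivAt φ' φ'' t) :
    deriv (deriv fun x => a₀ * exp (φ x)) t = a₀ * exp (φ t) * (φ' t ^ 2 + φ'') := by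
  have hderiv : deriv (fun x => a₀ * exp (φ x)) =ᶠ[𝓝 t] fun x => a₀ * exp (φ x) * φ' x :=
    hφ.mono fun x hx => deriv_const_mul_exp_comp hx
  rw [hderiv.deriv_eq, ((hφ.self_of_nhds.exp.const_mul a₀).fun_mul hφ').deriv]
  ring

theorem barotropicRatio_const_mul_exp_comp (ha₀ : a₀ ≠ 0) (hφt : φ' t ≠ 0)
    (hφ : ∀ᶠ x in 𝓝 t, HasDerivAt φ (φ' x) x) (hφ' : HasDerivAt φ' φ'' t) :
    barotropicRatio (fun x => a₀ * exp (φ x)) t = -1 - 2 * φ'' / (3 * φ' t ^ 2) :=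
  barotropicRatio_eq_of_hubble (by positivity) hφt
    (deriv_const_mul_exp_comp hφ.self_of_nhds) (deriv_deriv_const_mul_exp_comp hφ hφ')

end ConstMulExp

theorem barotropicRatio_const_mul_exp_rpow {a₀ a₁ α t : ℝ} (ha₀ : a₀ ≠ 0) (ha₁ : a₁ ≠ 0)
    (hα : α ≠ 0) (ht : 0 < t) :
    barotropicRatio (fun x => a₀ * exp (a₁ * x ^ (-α))) t
      = -1 - 2 * (α + 1) / (3 * α * a₁) * t ^ α := by
  have hφ : ∀ᶠ x in 𝓝 t, HasDerivAt (fun x => a₁ * x ^ (-α)) (a₁ * (-α * x ^ (-α - 1))) x :=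
    eventually_gt_nhds ht |>.mono fun x hx => (hasDerivAt_rpow_const (Or.inl hx.ne')).const_mul a₁
  have hφ' : HasDerivAt (fun x => a₁ * (-α * x ^ (-α - 1)))
      (a₁ * (-α * ((-α - 1) * t ^ (-α - 1 - 1)))) t :=
    ((hasDerivAt_rpow_const (Or.inl ht.ne')).const_mul (-α)).const_mul a₁
  have hpow : t ^ (-α - 1 - 1) = t ^ α * (t ^ (-α - 1)) ^ 2 := by
    rw [sq, ← rpow_add ht, ← rpow_add ht]
    ring_nf
  have hφt : a₁ * (-α * t ^ (-α - 1)) ≠ 0 :=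
    mul_ne_zero ha₁ (mul_ne_zero (neg_ne_zero.2 hα) (rpow_pos_of_pos ht _).ne')
  rw [barotropicRatio_const_mul_exp_comp (φ' := fun x => a₁ * (-α * x ^ (-α - 1))) ha₀ hφt hφ hφ',
    hpow]
  field_simp
  ring

/-- Grand Bang/Rip models: the barotropic ratio `p/ρ → -1` as `t → 0⁺`, where
`ρ = 3ȧ²/a²` and `p = -2ä/a - ȧ²/a²`, for `a(t) = a₀ e^(a₁ t^(-α))`. -/
theorem grand_barotropic_limit (a₀ a₁ α : ℝ) (ha₀ : 0 < a₀) (hα : 0 < α) (ha₁ : a₁ ≠ 0)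
    (a : ℝ → ℝ) (ha : ∀ t : ℝ, a t = a₀ * Real.exp (a₁ * t ^ (-α))) :
    Tendsto (fun t : ℝ =>
        (-2 * deriv (deriv a) t / a t - (deriv a t) ^ 2 / (a t) ^ 2) /
          (3 * (deriv a t) ^ 2 / (a t) ^ 2))
      (nhdsWithin 0 (Set.Ioi 0)) (nhds (-1)) := by
  obtain rfl : a = fun t => a₀ * exp (a₁ * t ^ (-α)) := funext ha
  change Tendsto (barotropicRatio _) _ _
  have hpow : Tendsto (fun t : ℝ => t ^ α) (𝓝[>] 0) (𝓝 0) := by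
    simpa [zero_rpow hα.ne'] using
      (continuousAt_rpow_const 0 α (Or.inr hα.le)).continuousWithinAt.tendsto (s := Set.Ioi 0)
  have hlim := (tendsto_const_nhds (x := (2 * (α + 1) / (3 * α * a₁)))).mul hpow
    |>.const_sub (-1 : ℝ)
  rw [mul_zero, sub_zero] at hlim
  exact hlim.congr' (eventually_mem_nhdsWithin.mono fun t ht =>
    (barotropicRatio_const_mul_exp_rpow ha₀.ne' ha₁ hα.ne' ht).symm)
end

section
/- For w > 0 (and w ≠ -1), both ρ(t) = 4/(3(1+w)²t²) and its densitized version ρ(t)a(t)³ = (4a₀³/(3(1+w)²)) t^(-2w/(1+w)) tend to +∞ as t → 0⁺; hence the densitization fails to regularize the Big Bang for any classical equation of state with w ∈ (0,1]. -/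
open Real Filter Topology

theorem tendsto_inv_pow_nhdsGT_zero {𝕜 : Type*} [Field 𝕜] [LinearOrder 𝕜] [IsStrictOrderedRing 𝕜]
    [TopologicalSpace 𝕜] [OrderTopology 𝕜] {n : ℕ} (hn : n ≠ 0) :
    Tendsto (fun t : 𝕜 => (t ^ n)⁻¹) (𝓝[>] 0) atTop :=
  ((tendsto_pow_atTop hn).comp tendsto_inv_nhdsGT_zero).congr fun t => by simp [inv_pow]

theorem densitization_fails_classical_general (a₀ w : ℝ) (ha₀ : 0 < a₀) (hw : 0 < w) :
    Tendsto (fun t : ℝ => 4 / (3 * (1 + w) ^ 2 * t ^ 2))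
      (nhdsWithin 0 (Set.Ioi 0)) atTop ∧
    Tendsto (fun t : ℝ => (4 * a₀ ^ 3 / (3 * (1 + w) ^ 2)) * t ^ (-2 * w / (1 + w)))
      (nhdsWithin 0 (Set.Ioi 0)) atTop := by
  have hexp : -2 * w / (1 + w) < 0 := div_neg_of_neg_of_pos (by linarith) (by linarith)
  constructor
  · refine ((tendsto_inv_pow_nhdsGT_zero two_ne_zero).const_mul_atTop
      (show (0 : ℝ) < 4 / (3 * (1 + w) ^ 2) by positivity)).congr fun t => ?_
    rw [← div_eq_mul_inv, div_div]
  · exact (tendsto_rpow_neg_nhdsGT_zero hexp).const_mul_atTop (by positivity)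

/-- For `w > 0`, both `ρ(t) = 4/(3(1+w)²t²)` and the densitized
`ρ a³ = (4a₀³/(3(1+w)²)) t^(-2w/(1+w))` tend to `+∞` as `t → 0⁺`: densitization
fails to regularize the Big Bang for any classical equation of state. -/
theorem densitization_fails_classical (a₀ w : ℝ) (ha₀ : 0 < a₀) (hw : 0 < w)
    (hw' : w ≠ -1) :
    Tendsto (fun t : ℝ => 4 / (3 * (1 + w) ^ 2 * t ^ 2))
      (nhdsWithin 0 (Set.Ioi 0)) atTop ∧
    Tendsto (fun t : ℝ => (4 * a₀ ^ 3 / (3 * (1 + w) ^ 2)) * t ^ (-2 * w / (1 + w)))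
      (nhdsWithin 0 (Set.Ioi 0)) atTop :=
  densitization_fails_classical_general a₀ w ha₀ hw
end
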